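/- In Bechhofer's setting with $k$ alternatives having independent Gaussian samples with common known variance $\sigma^2$ and means $\mu$ satisfying $\mu_{[k]} - \delta \ge \mu_{[k-1]}$: if the best alternative $j$ and each other alternative $i$ receive $n$ i.i.d. samples, the probability that some non-best alternative has sample mean at least that of the best is at most $P(\max_{i\neq j} Z_i \ge \delta\sqrt{n/(2\sigma^2)})$, where $(Z_i)_{i\neq j}$ are standard Gaussians with pairwise correlation $1/2$ given by $Z_i = \sqrt{n}\,(\bar X_i(n) - \bar X_j(n) - (\mu_i - \mu_j))/\sqrt{2\sigma^2}$. -/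
import Mathlib


open MeasureTheory Finset
open scoped ENNReal

/-- Bechhofer's setting: with `n` samples per alternative and means satisfying
`μ j - δ ≥ μ i` for every `i ≠ j` (alternative `j` is `δ`-best), the probability of an
incorrect selection (some non-best sample mean at least that of the best) is at most the
probability that some standardized variable `Z i` exceeds `δ √(n/(2σ²))`. -/
theorem bechhofer_incorrect_selection_bound
    {Ω : Type*} [MeasurableSpace Ω] (P : Measure Ω) [IsProbabilityMeasure P]
    {k : ℕ} (X : Fin k → ℕ → Ω → ℝ) (μ : Fin k → ℝ) (σ δ : ℝ)
    (hσ : 0 < σ) (hδ : 0 < δ) (j : Fin k)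
    (hbest : ∀ i : Fin k, i ≠ j → μ j - δ ≥ μ i)
    (n : ℕ) (hn : 0 < n)
    (Xbar : Fin k → Ω → ℝ)
    (hXbar : ∀ i ω, Xbar i ω = (∑ l ∈ Finset.range n, X i l ω) / n)
    (Z : Fin k → Ω → ℝ)
    (hZ : ∀ i ω, Z i ω =
      Real.sqrt n * (Xbar i ω - Xbar j ω - (μ i - μ j)) / Real.sqrt (2 * σ ^ 2)) :
    P {ω | ∃ i, i ≠ j ∧ Xbar i ω ≥ Xbar j ω}
      ≤ P {ω | ∃ i, i ≠ j ∧ Z i ω ≥ δ * Real.sqrt (n / (2 * σ ^ 2))} := by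
  apply measure_mono
  rintro ω ⟨i, hij, hge⟩
  refine ⟨i, hij, ?_⟩
  have hs : (0:ℝ) < 2 * σ ^ 2 := by positivity
  have hn' : (0:ℝ) ≤ (n:ℝ) := Nat.cast_nonneg n
  have hδ' : δ ≤ Xbar i ω - Xbar j ω - (μ i - μ j) := by
    have h1 : μ i - μ j ≤ -δ := by linarith [hbest i hij]
    linarith [hge]
  have heq : δ * Real.sqrt ((n:ℝ) / (2 * σ ^ 2))
      = Real.sqrt n * δ / Real.sqrt (2 * σ ^ 2) := by
    rw [Real.sqrt_div hn']; ring
  rw [hZ, ge_iff_le, heq]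
  gcongr
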